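/- Let D be a finitely generated abelian group, S a noetherian D-graded ring, and D' ⊆ D a subgroup. Then the Veronese subring S_{D'} = ⊕_{d∈D'} S_d satisfies the ascending chain condition on homogeneous ideals; in particular S_{D'} is noetherian. -/

import Mathlib

/-- The Veronese subring `S_{D'} = ⊕_{d ∈ D'} S_d` of a `D`-graded ring, for a subgroup
`D' ⊆ D`: since `D'` is closed under addition, this is the subring generated by the
homogeneous pieces of degrees in `D'`. -/
def veroneseSubgroupSubring {D S : Type*} [AddCommGroup D] [CommRing S]
    (𝒜 : D → AddSubgroup S) (D' : AddSubgroup D) : Subring S :=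
  Subring.closure (⋃ d ∈ D', (𝒜 d : Set S))

/-!
The projection of `S` onto its components of degree in `D'` is `S_{D'}`-linear, because
`e + d ∈ D' ↔ e ∈ D'` whenever `d ∈ D'`, and it is the identity on `S_{D'}`. So `S_{D'}` is
a direct summand of `S` as an `S_{D'}`-module, whence `I S ∩ S_{D'} = I` for every ideal `I` of
`S_{D'}`: extension of ideals embeds the ideal lattice of `S_{D'}` into that of the noetherian
ring `S`, and ascending chains of ideals of `S_{D'}` stabilize.
-/

namespace Ideal

variable {R S : Type*} [CommRing R] [CommRing S] [Algebra R S]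

theorem apply_mem_of_mem_map (p : S →ₗ[R] R) {I : Ideal R} {y : S}
    (hy : y ∈ I.map (algebraMap R S)) : p y ∈ I := by
  suffices ∀ s, p (s * y) ∈ I by simpa using this 1
  induction hy using Submodule.span_induction with
  | mem y hy =>
    obtain ⟨i, hi, rfl⟩ := hy
    intro s
    rw [mul_comm, ← Algebra.smul_def, map_smul, smul_eq_mul]
    exact I.mul_mem_right _ hi
  | zero => simp
  | add y z _ _ hy hz => intro s; rw [mul_add, map_add]; exact add_mem (hy s) (hz s)
  | smul t y _ hy => intro s; rw [smul_eq_mul, ← mul_assoc]; exact hy _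

theorem comap_map_eq_self_of_retraction (p : S →ₗ[R] R) (hp : ∀ r, p (algebraMap R S r) = r)
    (I : Ideal R) : (I.map (algebraMap R S)).comap (algebraMap R S) = I :=
  le_antisymm (fun x hx => hp x ▸ apply_mem_of_mem_map p hx) le_comap_map

end Ideal

theorem isNoetherianRing_of_retraction {R S : Type*} [CommRing R] [CommRing S] [Algebra R S]
    [IsNoetherianRing S] (p : S →ₗ[R] R) (hp : ∀ r, p (algebraMap R S r) = r) :
    IsNoetherianRing R := by
  rw [IsNoetherianRing, isNoetherian_iff'] at *
  refine (OrderEmbedding.ofMapLEIff (fun I : Ideal R => I.map (algebraMap R S))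
    fun I J => ⟨fun h => ?_, Ideal.map_mono⟩).wellFoundedGT
  simpa only [Ideal.comap_map_eq_self_of_retraction p hp] using
    Ideal.comap_mono (f := algebraMap R S) h

namespace DirectSum

variable {ι S : Type*} [DecidableEq ι] [AddCommGroup S] (𝒜 : ι → AddSubgroup S)
  [Decomposition 𝒜]

open Classical in
noncomputable def projOn (T : Set ι) : S →+ S :=
  (decomposeAddEquiv 𝒜).symm.toAddMonoidHom.comp <|
    (DFinsupp.filterAddMonoidHom _ (· ∈ T)).comp (decomposeAddEquiv 𝒜).toAddMonoidHom

open Classical in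
theorem projOn_coe (T : Set ι) {i : ι} (x : 𝒜 i) :
    projOn 𝒜 T (x : S) = if i ∈ T then (x : S) else 0 := by
  simp only [projOn, AddMonoidHom.coe_comp, Function.comp_apply, AddEquiv.coe_toAddMonoidHom,
    decomposeAddEquiv_apply, decompose_coe, DFinsupp.filterAddMonoidHom_apply]
  rw [of, DFinsupp.singleAddHom_apply, DFinsupp.filter_single]
  split_ifs
  · exact decompose_symm_of 𝒜 x
  · simp

end DirectSum

namespace veroneseSubgroupSubring

open DirectSum

variable {D S : Type*} [AddCommGroup D] [CommRing S] (𝒜 : D → AddSubgroup S)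
  (D' : AddSubgroup D)

theorem homogeneousComponent_subset {d : D} (hd : d ∈ D') :
    (𝒜 d : Set S) ⊆ veroneseSubgroupSubring 𝒜 D' :=
  fun _ hx => Subring.subset_closure (Set.mem_biUnion hd hx)

variable [DecidableEq D] [GradedRing 𝒜]

theorem projOn_mem (s : S) : projOn 𝒜 (D' : Set D) s ∈ veroneseSubgroupSubring 𝒜 D' := by
  induction s using Decomposition.inductionOn 𝒜 with
  | zero => simp
  | homogeneous x =>
    rw [projOn_coe]
    split_ifs with h
    · exact homogeneousComponent_subset 𝒜 D' h x.2
    · exact zero_mem _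
  | add x y hx hy => rw [map_add]; exact add_mem hx hy

theorem projOn_mul_homogeneous {d : D} (hd : d ∈ D') {r : S} (hr : r ∈ 𝒜 d) (s : S) :
    projOn 𝒜 (D' : Set D) (s * r) = projOn 𝒜 (D' : Set D) s * r := by
  induction s using Decomposition.inductionOn 𝒜 with
  | zero => simp
  | @homogeneous e x =>
    rw [← Subtype.coe_mk (x * r : S) (SetLike.mul_mem_graded x.2 hr), projOn_coe, projOn_coe]
    split_ifs <;> simp_all [D'.add_mem_cancel_right hd]
  | add x y hx hy => rw [add_mul, map_add, map_add, hx, hy, add_mul]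

theorem projOn_mul {r : S} (hr : r ∈ veroneseSubgroupSubring 𝒜 D') (s : S) :
    projOn 𝒜 (D' : Set D) (s * r) = projOn 𝒜 (D' : Set D) s * r := by
  induction hr using Subring.closure_induction generalizing s with
  | mem r hr =>
    obtain ⟨d, hd, hr⟩ := Set.mem_iUnion₂.mp hr
    exact projOn_mul_homogeneous 𝒜 D' hd hr s
  | zero => simp
  | one => simp
  | add x y _ _ hx hy => rw [mul_add, map_add, hx, hy, mul_add]
  | neg x _ hx => rw [mul_neg, map_neg, hx, mul_neg]
  | mul x y _ _ hx hy => rw [← mul_assoc, hy, hx, mul_assoc]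

theorem projOn_one : projOn 𝒜 (D' : Set D) (1 : S) = 1 := by
  rw [← Subtype.coe_mk (1 : S) (SetLike.one_mem_graded 𝒜), projOn_coe]
  exact if_pos D'.zero_mem

theorem projOn_of_mem {r : S} (hr : r ∈ veroneseSubgroupSubring 𝒜 D') :
    projOn 𝒜 (D' : Set D) r = r := by
  rw [← one_mul r, projOn_mul 𝒜 D' hr, projOn_one, one_mul]

noncomputable def proj :
    S →ₗ[veroneseSubgroupSubring 𝒜 D'] veroneseSubgroupSubring 𝒜 D' where
  toFun s := ⟨projOn 𝒜 D' s, projOn_mem 𝒜 D' s⟩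
  map_add' x y := Subtype.ext (map_add _ x y)
  map_smul' r s := Subtype.ext <| by
    simp only [Subring.smul_def, smul_eq_mul, Subring.coe_mul, RingHom.id_apply]
    rw [mul_comm, projOn_mul 𝒜 D' r.2, mul_comm]

theorem isNoetherianRing [IsNoetherianRing S] :
    IsNoetherianRing (veroneseSubgroupSubring 𝒜 D') :=
  isNoetherianRing_of_retraction (proj 𝒜 D') fun r => Subtype.ext (projOn_of_mem 𝒜 D' r.2)

end veroneseSubgroupSubring

theorem stmt_2 {D S : Type*} [AddCommGroup D] [DecidableEq D]
    [CommRing S] (𝒜 : D → AddSubgroup S) [GradedRing 𝒜] [IsNoetherianRing S]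
    (D' : AddSubgroup D) :
    (∀ c : ℕ → Ideal (veroneseSubgroupSubring 𝒜 D'),
      (∀ n, ∃ gen : Set (veroneseSubgroupSubring 𝒜 D'),
        (∀ x ∈ gen, ∃ d ∈ D', (x : S) ∈ 𝒜 d) ∧ c n = Ideal.span gen) →
      Monotone c → ∃ n, ∀ m, n ≤ m → c m = c n)
    ∧ IsNoetherianRing (veroneseSubgroupSubring 𝒜 D') := by
  have hR := veroneseSubgroupSubring.isNoetherianRing 𝒜 D'
  refine ⟨fun c _ hc => ?_, hR⟩
  obtain ⟨n, hn⟩ := monotone_stabilizes_iff_noetherian.mpr hR ⟨c, hc⟩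
  exact ⟨n, fun m hm => (hn m hm).symm⟩
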